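/- (Corollary 1) Let V : [0,1] → ℝ be bounded and convex, with x ↦ V(Γ_x(b)) W_b(x) μ-integrable for every b, and suppose V satisfies the Bellman equation V(b) = max{ λ b + β ∫_X V(Γ_x(b)) W_b(x) dμ(x), λ − c + β V(1−p) } for all b ∈ [0,1]. Define f(b) = λ b − (λ − c) + β ∫_X V(Γ_x(b)) W_b(x) dμ(x) − β V(1−p). Then for every μ₀ ≥ 0 there exists ξ ∈ ℝ such that the sublevel set { b ∈ [0,1] : f(b) ≤ −μ₀ } equals [0, ξ] ∩ [0,1] (the empty set when ξ < 0). -/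

import Mathlib

open MeasureTheory

/-- Unnormalized observation probability `W_b(x) = Q1(x) b + Q0(x)(1-b)`. -/
noncomputable def Wf {X : Type*} (Q0 Q1 : X → ℝ) (b : ℝ) (x : X) : ℝ :=
  Q1 x * b + Q0 x * (1 - b)

/-- Do-nothing belief update `Γ_x(b) = (1-p) Q1(x) b / W_b(x)`; since in `ℝ`
division by zero yields `0`, this automatically satisfies the convention
`Γ_x(b) = 0` when `W_b(x) = 0`. -/
noncomputable def Gf {X : Type*} (p : ℝ) (Q0 Q1 : X → ℝ) (x : X) (b : ℝ) : ℝ :=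
  (1 - p) * Q1 x * b / Wf Q0 Q1 b x

/-!
The continuation value `b ↦ ∫ V(Γ_x(b)) W_b(x) dμ` is an integral of perspectives of the convex
function `V` along the affine map `b ↦ ((1-p) Q1(x) b, W_b(x))`, hence convex, and so is `f`. The
Bellman operator is a `β`-contraction, which pins `V` between `0` and `λ/(1-β)`. The lower bound
makes `0` a minimiser of `f` on `[0,1]`; the upper bound gives `(1-β)(λ - c + β V(1-p)) < λ`, so
`f > 0` near `1`. A convex sublevel set containing `0` and bounded away from `1` is an interval
`[0, ξ]`, closed at `ξ` because a convex function is continuous in the interior of its domain.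
-/

open Set

theorem ConvexOn.perspective_add_le {s : Set ℝ} {V : ℝ → ℝ} (hV : ConvexOn ℝ s V)
    {u v α τ : ℝ} (hu : u ∈ s) (hv : v ∈ s) (hα : 0 ≤ α) (hτ : 0 ≤ τ) :
    V ((α * u + τ * v) / (α + τ)) * (α + τ) ≤ α * V u + τ * V v := by
  rcases (add_nonneg hα hτ).eq_or_lt with hsum | hsum
  · have hα0 : α = 0 := by linarith
    have hτ0 : τ = 0 := by linarith
    simp [hα0, hτ0]
  · have hweights : α / (α + τ) + τ / (α + τ) = 1 := by field_simp
    have h := hV.2 hu hv (div_nonneg hα hsum.le) (div_nonneg hτ hsum.le) hweights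
    simp only [smul_eq_mul] at h
    calc V ((α * u + τ * v) / (α + τ)) * (α + τ)
        = V (α / (α + τ) * u + τ / (α + τ) * v) * (α + τ) := by congr 2; field_simp
      _ ≤ (α / (α + τ) * V u + τ / (α + τ) * V v) * (α + τ) := by gcongr
      _ = α * V u + τ * V v := by field_simp

theorem le_div_one_sub_of_forall_le {α : Type*} {V : α → ℝ} {s : Set α} {a β : ℝ}
    (hbdd : BddAbove (V '' s)) (hβ : β < 1)
    (hstep : ∀ M, (∀ y ∈ s, V y ≤ M) → ∀ y ∈ s, V y ≤ a + β * M) :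
    ∀ y ∈ s, V y ≤ a / (1 - β) := by
  intro y hy
  have hne : (V '' s).Nonempty := ⟨V y, mem_image_of_mem V hy⟩
  have hsup : ∀ z ∈ s, V z ≤ sSup (V '' s) := fun z hz => le_csSup hbdd (mem_image_of_mem V hz)
  have hfix : sSup (V '' s) ≤ a + β * sSup (V '' s) :=
    csSup_le hne (forall_mem_image.2 (hstep _ hsup))
  rw [le_div_iff₀ (by linarith)]
  nlinarith [hsup y hy]

theorem ConvexOn.exists_sublevel_eq_Icc_inter {f : ℝ → ℝ} {a z t b₀ : ℝ}
    (hf : ConvexOn ℝ (Icc a z) f) (hmin : IsMinOn f (Icc a z) a) (hb₀ : b₀ ∈ Ico a z)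
    (ht : t < f b₀) : ∃ ξ, {b ∈ Icc a z | f b ≤ t} = Icc a ξ ∩ Icc a z := by
  set S := {b ∈ Icc a z | f b ≤ t}
  rcases S.eq_empty_or_nonempty with hS | ⟨b, hb⟩
  · exact ⟨a - 1, by rw [hS, Icc_eq_empty (by linarith), empty_inter]⟩
  have hconv : S.OrdConnected := convex_iff_ordConnected.1 (hf.convex_le t)
  have haS : a ∈ S := ⟨left_mem_Icc.2 (hb.1.1.trans hb.1.2), (hmin hb.1).trans hb.2⟩
  have hS_lt : ∀ b ∈ S, b < b₀ := fun b hb => by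
    by_contra! hle
    exact ht.not_ge (hconv.out haS hb ⟨hb₀.1, hle⟩).2
  have hbdd : BddAbove S := ⟨b₀, fun b hb => (hS_lt b hb).le⟩
  set ξ := sSup S
  have haξ : a ≤ ξ := le_csSup hbdd haS
  have hξb₀ : ξ ≤ b₀ := csSup_le ⟨a, haS⟩ fun b hb => (hS_lt b hb).le
  have hξS : ξ ∈ S := by
    rcases haξ.eq_or_lt with hξ | hξ
    · rwa [← hξ]
    have hcont : ContinuousAt f ξ := by
      refine hf.continuousOn_interior.continuousAt ?_
      rw [interior_Icc]
      exact Ioo_mem_nhds hξ (hξb₀.trans_lt hb₀.2)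
    have hcl : f ξ ∈ closure (f '' S) :=
      hcont.continuousWithinAt.mem_closure_image (csSup_mem_closure ⟨a, haS⟩ hbdd)
    refine ⟨⟨haξ, hξb₀.trans hb₀.2.le⟩, ?_⟩
    exact closure_minimal (image_subset_iff.2 fun b hb => hb.2) isClosed_Iic hcl
  refine ⟨ξ, ?_⟩
  rw [inter_eq_left.2 (Icc_subset_Icc_right hξS.1.2)]
  exact Subset.antisymm (fun b hb => ⟨hb.1.1, le_csSup hbdd hb⟩) (hconv.out haS hξS)

section Integral

variable {X : Type*} [MeasurableSpace X] {μ : Measure X}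

theorem convexOn_integral {E : Type*} [AddCommGroup E] [Module ℝ E] {s : Set E}
    {F : X → E → ℝ} (hs : Convex ℝ s) (hF : ∀ x, ConvexOn ℝ s (F x)) (hint : ∀ b ∈ s, Integrable (F · b) μ) :
    ConvexOn ℝ s fun b => ∫ x, F x b ∂μ := by
  refine ⟨hs, fun b₁ hb₁ b₂ hb₂ a t ha ht hat => ?_⟩
  have hint₁ := (hint b₁ hb₁).const_mul a
  have hint₂ := (hint b₂ hb₂).const_mul t
  calc ∫ x, F x (a • b₁ + t • b₂) ∂μ ≤ ∫ x, a * F x b₁ + t * F x b₂ ∂μ :=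
        integral_mono (hint _ (hs hb₁ hb₂ ha ht hat)) (hint₁.add hint₂)
          fun x => (hF x).2 hb₁ hb₂ ha ht hat
    _ = a • ∫ x, F x b₁ ∂μ + t • ∫ x, F x b₂ ∂μ := by
        rw [integral_add hint₁ hint₂, integral_const_mul, integral_const_mul]; rfl

theorem le_integral_mul_of_forall_le {w φ : X → ℝ} {m : ℝ} (hw : ∀ x, 0 ≤ w x)
    (hw1 : ∫ x, w x ∂μ = 1) (hint : Integrable (fun x => φ x * w x) μ) (hm : ∀ x, m ≤ φ x) :
    m ≤ ∫ x, φ x * w x ∂μ :=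
  calc m = ∫ x, m * w x ∂μ := by rw [integral_const_mul, hw1, mul_one]
    _ ≤ ∫ x, φ x * w x ∂μ := integral_mono ((integrable_of_integral_eq_one hw1).const_mul m)
        hint fun x => mul_le_mul_of_nonneg_right (hm x) (hw x)

theorem integral_mul_le_of_forall_le {w φ : X → ℝ} {M : ℝ} (hw : ∀ x, 0 ≤ w x)
    (hw1 : ∫ x, w x ∂μ = 1) (hint : Integrable (fun x => φ x * w x) μ) (hM : ∀ x, φ x ≤ M) :
    ∫ x, φ x * w x ∂μ ≤ M :=
  calc ∫ x, φ x * w x ∂μ ≤ ∫ x, M * w x ∂μ := integral_mono hint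
        ((integrable_of_integral_eq_one hw1).const_mul M)
        fun x => mul_le_mul_of_nonneg_right (hM x) (hw x)
    _ = M := by rw [integral_const_mul, hw1, mul_one]

end Integral

section Observation

variable {X : Type*} {p : ℝ} {Q0 Q1 : X → ℝ} {x : X}

theorem Wf_nonneg (hQ0 : 0 ≤ Q0 x) (hQ1 : 0 ≤ Q1 x) {b : ℝ} (hb : b ∈ Icc (0 : ℝ) 1) :
    0 ≤ Wf Q0 Q1 b x :=
  add_nonneg (mul_nonneg hQ1 hb.1) (mul_nonneg hQ0 (sub_nonneg.2 hb.2))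

theorem Wf_mul_add_mul {a t : ℝ} (hat : a + t = 1) (b₁ b₂ : ℝ) :
    Wf Q0 Q1 (a * b₁ + t * b₂) x = a * Wf Q0 Q1 b₁ x + t * Wf Q0 Q1 b₂ x := by
  obtain rfl : t = 1 - a := by linarith
  simp only [Wf]; ring

theorem Gf_mul_Wf (hQ0 : 0 ≤ Q0 x) (hQ1 : 0 ≤ Q1 x) {b : ℝ} (hb : b ∈ Icc (0 : ℝ) 1) :
    Gf p Q0 Q1 x b * Wf Q0 Q1 b x = (1 - p) * Q1 x * b := by
  rcases eq_or_ne (Wf Q0 Q1 b x) 0 with hW | hW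
  · have : Q1 x * b = 0 := by
      have := mul_nonneg hQ0 (sub_nonneg.2 hb.2)
      rw [Wf] at hW; nlinarith [mul_nonneg hQ1 hb.1]
    rw [hW, mul_zero, mul_assoc, this, mul_zero]
  · exact div_mul_cancel₀ _ hW

theorem Gf_mem_Icc (hp : p ∈ Icc (0 : ℝ) 1) (hQ0 : 0 ≤ Q0 x) (hQ1 : 0 ≤ Q1 x) {b : ℝ}
    (hb : b ∈ Icc (0 : ℝ) 1) : Gf p Q0 Q1 x b ∈ Icc (0 : ℝ) 1 := by
  have hN : 0 ≤ (1 - p) * Q1 x * b := mul_nonneg (mul_nonneg (sub_nonneg.2 hp.2) hQ1) hb.1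
  refine ⟨div_nonneg hN (Wf_nonneg hQ0 hQ1 hb), div_le_one_of_le₀ ?_ (Wf_nonneg hQ0 hQ1 hb)⟩
  rw [Wf]
  nlinarith [mul_nonneg hp.1 (mul_nonneg hQ1 hb.1), mul_nonneg hQ0 (sub_nonneg.2 hb.2)]

theorem Wf_zero : Wf Q0 Q1 0 x = Q0 x := by
  simp [Wf]

theorem Gf_zero : Gf p Q0 Q1 x 0 = 0 := by
  simp [Gf]

theorem convexOn_comp_Gf_mul_Wf (hp : p ∈ Icc (0 : ℝ) 1) (hQ0 : 0 ≤ Q0 x) (hQ1 : 0 ≤ Q1 x)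
    {V : ℝ → ℝ} (hV : ConvexOn ℝ (Icc 0 1) V) :
    ConvexOn ℝ (Icc 0 1) fun b => V (Gf p Q0 Q1 x b) * Wf Q0 Q1 b x := by
  refine ⟨convex_Icc 0 1, fun b₁ hb₁ b₂ hb₂ a t ha ht hat => ?_⟩
  simp only [smul_eq_mul]
  have hΓ : Gf p Q0 Q1 x (a * b₁ + t * b₂) =
      (a * Wf Q0 Q1 b₁ x * Gf p Q0 Q1 x b₁ + t * Wf Q0 Q1 b₂ x * Gf p Q0 Q1 x b₂) /
        (a * Wf Q0 Q1 b₁ x + t * Wf Q0 Q1 b₂ x) := by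
    rw [Gf, Wf_mul_add_mul hat, mul_assoc a, mul_comm (Wf _ _ _ _), Gf_mul_Wf hQ0 hQ1 hb₁,
      mul_assoc t, mul_comm (Wf _ _ _ _), Gf_mul_Wf hQ0 hQ1 hb₂]
    ring_nf
  rw [hΓ, Wf_mul_add_mul hat]
  calc _ ≤ a * Wf Q0 Q1 b₁ x * V (Gf p Q0 Q1 x b₁) + t * Wf Q0 Q1 b₂ x * V (Gf p Q0 Q1 x b₂) :=
        hV.perspective_add_le (Gf_mem_Icc hp hQ0 hQ1 hb₁) (Gf_mem_Icc hp hQ0 hQ1 hb₂)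
          (mul_nonneg ha (Wf_nonneg hQ0 hQ1 hb₁)) (mul_nonneg ht (Wf_nonneg hQ0 hQ1 hb₂))
    _ = _ := by ring

end Observation

section ContinuationValue

variable {X : Type*} [MeasurableSpace X] {μ : Measure X} {p : ℝ} {Q0 Q1 : X → ℝ} {V : ℝ → ℝ}

theorem integral_Wf (hQ0int : ∫ x, Q0 x ∂μ = 1) (hQ1int : ∫ x, Q1 x ∂μ = 1) (b : ℝ) :
    ∫ x, Wf Q0 Q1 b x ∂μ = 1 := by
  have hQ0 := (integrable_of_integral_eq_one hQ0int).mul_const (1 - b)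
  have hQ1 := (integrable_of_integral_eq_one hQ1int).mul_const b
  simp only [Wf]
  rw [integral_add hQ1 hQ0, integral_mul_const, integral_mul_const, hQ0int, hQ1int]
  ring

noncomputable def continuationValue (μ : Measure X) (p : ℝ) (Q0 Q1 : X → ℝ) (V : ℝ → ℝ)
    (b : ℝ) : ℝ :=
  ∫ x, V (Gf p Q0 Q1 x b) * Wf Q0 Q1 b x ∂μ

theorem continuationValue_zero (hQ0int : ∫ x, Q0 x ∂μ = 1) :
    continuationValue μ p Q0 Q1 V 0 = V 0 := by
  simp only [continuationValue, Gf_zero, Wf_zero, integral_const_mul, hQ0int, mul_one]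

theorem le_continuationValue (hp : p ∈ Icc (0 : ℝ) 1) (hQ0nn : ∀ x, 0 ≤ Q0 x)
    (hQ1nn : ∀ x, 0 ≤ Q1 x) (hQ0int : ∫ x, Q0 x ∂μ = 1) (hQ1int : ∫ x, Q1 x ∂μ = 1) {b m : ℝ}
    (hb : b ∈ Icc (0 : ℝ) 1) (hint : Integrable (fun x => V (Gf p Q0 Q1 x b) * Wf Q0 Q1 b x) μ)
    (hm : ∀ y ∈ Icc (0 : ℝ) 1, m ≤ V y) : m ≤ continuationValue μ p Q0 Q1 V b :=
  le_integral_mul_of_forall_le (fun x => Wf_nonneg (hQ0nn x) (hQ1nn x) hb)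
    (integral_Wf hQ0int hQ1int b) hint fun x => hm _ (Gf_mem_Icc hp (hQ0nn x) (hQ1nn x) hb)

theorem continuationValue_le (hp : p ∈ Icc (0 : ℝ) 1) (hQ0nn : ∀ x, 0 ≤ Q0 x)
    (hQ1nn : ∀ x, 0 ≤ Q1 x) (hQ0int : ∫ x, Q0 x ∂μ = 1) (hQ1int : ∫ x, Q1 x ∂μ = 1) {b M : ℝ}
    (hb : b ∈ Icc (0 : ℝ) 1) (hint : Integrable (fun x => V (Gf p Q0 Q1 x b) * Wf Q0 Q1 b x) μ)
    (hM : ∀ y ∈ Icc (0 : ℝ) 1, V y ≤ M) : continuationValue μ p Q0 Q1 V b ≤ M :=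
  integral_mul_le_of_forall_le (fun x => Wf_nonneg (hQ0nn x) (hQ1nn x) hb)
    (integral_Wf hQ0int hQ1int b) hint fun x => hM _ (Gf_mem_Icc hp (hQ0nn x) (hQ1nn x) hb)

theorem convexOn_continuationValue (hp : p ∈ Icc (0 : ℝ) 1) (hQ0nn : ∀ x, 0 ≤ Q0 x)
    (hQ1nn : ∀ x, 0 ≤ Q1 x) (hV : ConvexOn ℝ (Icc 0 1) V)
    (hint : ∀ b ∈ Icc (0 : ℝ) 1, Integrable (fun x => V (Gf p Q0 Q1 x b) * Wf Q0 Q1 b x) μ) :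
    ConvexOn ℝ (Icc 0 1) (continuationValue μ p Q0 Q1 V) :=
  convexOn_integral (convex_Icc 0 1)
    (fun x => convexOn_comp_Gf_mul_Wf hp (hQ0nn x) (hQ1nn x) hV) hint

end ContinuationValue

section Bellman

variable {lam c β p : ℝ} {V g : ℝ → ℝ}

/-- `g` plays the role of `continuationValue μ p Q0 Q1 V`; the lemmas below only use that `g`
respects the lower and upper bounds of `V` on `[0,1]`. -/
def SolvesBellman (lam c β p : ℝ) (V g : ℝ → ℝ) : Prop :=
  ∀ b ∈ Icc (0 : ℝ) 1, V b = max (lam * b + β * g b) (lam - c + β * V (1 - p))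

namespace SolvesBellman

theorem repair_le (hV : SolvesBellman lam c β p V g) {y : ℝ} (hy : y ∈ Icc (0 : ℝ) 1) :
    lam - c + β * V (1 - p) ≤ V y :=
  (hV y hy).ge.trans' (le_max_right _ _)

theorem nonneg (hV : SolvesBellman lam c β p V g) {C : ℝ} (hC : ∀ y ∈ Icc (0 : ℝ) 1, |V y| ≤ C)
    (hlam : 0 ≤ lam) (hβ0 : 0 ≤ β) (hβ1 : β < 1)
    (hg : ∀ m, (∀ y ∈ Icc (0 : ℝ) 1, m ≤ V y) → ∀ b ∈ Icc (0 : ℝ) 1, m ≤ g b) :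
    ∀ y ∈ Icc (0 : ℝ) 1, 0 ≤ V y := by
  have hbdd : BddAbove ((fun y => -V y) '' Icc 0 1) :=
    ⟨C, forall_mem_image.2 fun y hy => (neg_le_abs _).trans (hC y hy)⟩
  have key := le_div_one_sub_of_forall_le (a := 0) hbdd hβ1 fun M hM y hy => by
    have hgy := hg (-M) (fun z hz => by linarith [hM z hz]) y hy
    have hVy := (hV y hy).ge.trans' (le_max_left _ _)
    nlinarith [mul_nonneg hlam hy.1, mul_le_mul_of_nonneg_left hgy hβ0]
  intro y hy
  simpa using key y hy

theorem le_div_one_sub (hV : SolvesBellman lam c β p V g) {C : ℝ}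
    (hC : ∀ y ∈ Icc (0 : ℝ) 1, |V y| ≤ C) (hp : p ∈ Icc (0 : ℝ) 1) (hlam : 0 ≤ lam) (hc : 0 ≤ c) (hβ0 : 0 ≤ β) (hβ1 : β < 1)
    (hg : ∀ M, (∀ y ∈ Icc (0 : ℝ) 1, V y ≤ M) → ∀ b ∈ Icc (0 : ℝ) 1, g b ≤ M) :
    ∀ y ∈ Icc (0 : ℝ) 1, V y ≤ lam / (1 - β) := by
  have hbdd : BddAbove (V '' Icc 0 1) :=
    ⟨C, forall_mem_image.2 fun y hy => (le_abs_self _).trans (hC y hy)⟩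
  refine le_div_one_sub_of_forall_le hbdd hβ1 fun M hM y hy => ?_
  have h1p : 1 - p ∈ Icc (0 : ℝ) 1 := ⟨sub_nonneg.2 hp.2, by linarith [hp.1]⟩
  rw [hV y hy]
  refine max_le ?_ ?_
  · nlinarith [mul_le_mul_of_nonneg_left (hg M hM y hy) hβ0, mul_le_mul_of_nonneg_left hy.2 hlam]
  · nlinarith [mul_le_mul_of_nonneg_left (hM _ h1p) hβ0]

theorem isMinOn_zero (hV : SolvesBellman lam c β p V g) (hV0 : ∀ y ∈ Icc (0 : ℝ) 1, 0 ≤ V y)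
    (hlam : 0 ≤ lam) (hβ0 : 0 ≤ β) (hβ1 : β < 1) (hg0 : g 0 = V 0)
    (hg : ∀ m, (∀ y ∈ Icc (0 : ℝ) 1, m ≤ V y) → ∀ b ∈ Icc (0 : ℝ) 1, m ≤ g b) :
    IsMinOn (fun b => lam * b + β * g b - (lam - c + β * V (1 - p))) (Icc 0 1) 0 := by
  refine isMinOn_iff.2 fun b hb => ?_
  have h0 : (0 : ℝ) ∈ Icc (0 : ℝ) 1 := left_mem_Icc.2 zero_le_one
  have hV0_le : V 0 ≤ max (lam - c + β * V (1 - p)) 0 := by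
    have h := hV 0 h0
    rw [mul_zero, zero_add, hg0] at h
    rcases max_choice (β * V 0) (lam - c + β * V (1 - p)) with hmax | hmax <;> rw [hmax] at h
    · nlinarith [hV0 0 h0, le_max_right (lam - c + β * V (1 - p)) 0]
    · exact h.le.trans (le_max_left _ _)
  have hgb := hg _ (fun y hy => max_le (hV.repair_le hy) (hV0 y hy)) b hb
  simp only [mul_zero, zero_add, hg0]
  nlinarith [mul_nonneg hlam hb.1, mul_le_mul_of_nonneg_left (hV0_le.trans hgb) hβ0]

theorem exists_mem_Ico_pos (hV : SolvesBellman lam c β p V g) (hVp : V (1 - p) ≤ lam / (1 - β))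
    (hlam : 0 < lam) (hc : 0 < c) (hβ0 : 0 ≤ β) (hβ1 : β < 1)
    (hg : ∀ m, (∀ y ∈ Icc (0 : ℝ) 1, m ≤ V y) → ∀ b ∈ Icc (0 : ℝ) 1, m ≤ g b) :
    ∃ b₀ ∈ Ico (0 : ℝ) 1, 0 < lam * b₀ + β * g b₀ - (lam - c + β * V (1 - p)) := by
  set K := lam - c + β * V (1 - p)
  have hK : (1 - β) * K < lam := by
    rw [le_div_iff₀ (by linarith)] at hVp
    nlinarith [mul_pos (sub_pos.2 hβ1) hc, mul_le_mul_of_nonneg_left hVp hβ0]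
  obtain ⟨b₀, hlo, hhi⟩ := exists_between (max_lt zero_lt_one ((div_lt_one hlam).2 hK))
  have hb₀ : b₀ ∈ Ico (0 : ℝ) 1 := ⟨(le_max_left _ _).trans hlo.le, hhi⟩
  have hgb := hg K (fun y hy => hV.repair_le hy) b₀ ⟨hb₀.1, hhi.le⟩
  have hlb : (1 - β) * K < lam * b₀ := (div_lt_iff₀' hlam).1 ((le_max_right _ _).trans_lt hlo)
  exact ⟨b₀, hb₀, by nlinarith [mul_le_mul_of_nonneg_left hgb hβ0]⟩

end SolvesBellman

end Bellman

theorem adr_f_sublevel_sets_are_intervals_general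
    {X : Type*} [MeasurableSpace X] (μ : Measure X)
    (p lam c β : ℝ)
    (hp : p ∈ Set.Icc (0 : ℝ) 1) (hlam : 0 < lam) (hc : 0 < c)
    (hβ : β ∈ Set.Ioo (0 : ℝ) 1)
    (Q0 Q1 : X → ℝ)
    (hQ0nn : ∀ x, 0 ≤ Q0 x) (hQ1nn : ∀ x, 0 ≤ Q1 x)
    (hQ0int : ∫ x, Q0 x ∂μ = 1) (hQ1int : ∫ x, Q1 x ∂μ = 1)
    (V : ℝ → ℝ)
    (hVbdd : ∃ C, ∀ b ∈ Set.Icc (0 : ℝ) 1, |V b| ≤ C)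
    (hVconv : ConvexOn ℝ (Set.Icc (0 : ℝ) 1) V)
    (hVint : ∀ b ∈ Set.Icc (0 : ℝ) 1,
      Integrable (fun x => V (Gf p Q0 Q1 x b) * Wf Q0 Q1 b x) μ)
    (hBellman : ∀ b ∈ Set.Icc (0 : ℝ) 1,
      V b = max (lam * b + β * ∫ x, V (Gf p Q0 Q1 x b) * Wf Q0 Q1 b x ∂μ)
                (lam - c + β * V (1 - p)))
    (f : ℝ → ℝ)
    (hf : ∀ b, f b = lam * b - (lam - c) +
      β * ∫ x, V (Gf p Q0 Q1 x b) * Wf Q0 Q1 b x ∂μ - β * V (1 - p)) :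
    ∀ μ₀ : ℝ, 0 ≤ μ₀ →
      ∃ ξ : ℝ, {b ∈ Set.Icc (0 : ℝ) 1 | f b ≤ -μ₀} =
        Set.Icc 0 ξ ∩ Set.Icc (0 : ℝ) 1 := by
  intro μ₀ hμ₀
  obtain ⟨C, hC⟩ := hVbdd
  have hB : SolvesBellman lam c β p V (continuationValue μ p Q0 Q1 V) := hBellman
  have hg_lb m (hm : ∀ y ∈ Icc (0 : ℝ) 1, m ≤ V y) b (hb : b ∈ Icc (0 : ℝ) 1) :=
    le_continuationValue hp hQ0nn hQ1nn hQ0int hQ1int hb (hVint b hb) hm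
  have hg_ub M (hM : ∀ y ∈ Icc (0 : ℝ) 1, V y ≤ M) b (hb : b ∈ Icc (0 : ℝ) 1) :=
    continuationValue_le hp hQ0nn hQ1nn hQ0int hQ1int hb (hVint b hb) hM
  have hV0 := hB.nonneg hC hlam.le hβ.1.le hβ.2 hg_lb
  have hV1 := hB.le_div_one_sub hC hp hlam.le hc.le hβ.1.le hβ.2 hg_ub
  obtain ⟨b₀, hb₀, hfb₀⟩ :=
    hB.exists_mem_Ico_pos (hV1 _ ⟨sub_nonneg.2 hp.2, by linarith [hp.1]⟩) hlam hc hβ.1.le hβ.2 hg_lb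
  have hmin := hB.isMinOn_zero hV0 hlam.le hβ.1.le hβ.2 (continuationValue_zero hQ0int) hg_lb
  obtain rfl : f = fun b => lam * b + β * continuationValue μ p Q0 Q1 V b -
      (lam - c + β * V (1 - p)) := funext fun b => by rw [hf, continuationValue]; ring
  have hconv : ConvexOn ℝ (Icc 0 1) fun b => lam * b + β * continuationValue μ p Q0 Q1 V b -
      (lam - c + β * V (1 - p)) :=
    (((convexOn_id (convex_Icc 0 1)).smul hlam.le).add
      ((convexOn_continuationValue hp hQ0nn hQ1nn hVconv hVint).smul hβ.1.le)).add_const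
      (-(lam - c + β * V (1 - p))) |>.congr fun b _ => by simp [sub_eq_add_neg]
  exact hconv.exists_sublevel_eq_Icc_inter hmin hb₀ (by linarith)

/-- **Corollary 1.** Let `V : [0,1] → ℝ` be bounded and convex,
with `x ↦ V(Γ_x(b)) W_b(x)` μ-integrable for every `b`, satisfying the
Bellman equation
`V(b) = max{ λ b + β ∫ V(Γ_x(b)) W_b(x) dμ(x), λ − c + β V(1−p) }` on `[0,1]`.
Define `f(b) = λ b − (λ − c) + β ∫ V(Γ_x(b)) W_b(x) dμ(x) − β V(1−p)`.  Then
for every `μ₀ ≥ 0` there exists `ξ ∈ ℝ` such that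
`{ b ∈ [0,1] : f(b) ≤ −μ₀ } = [0, ξ] ∩ [0,1]` (empty when `ξ < 0`). -/
theorem adr_f_sublevel_sets_are_intervals
    {X : Type*} [MeasurableSpace X] (μ : Measure X) [SigmaFinite μ]
    (p lam c β : ℝ)
    (hp : p ∈ Set.Icc (0 : ℝ) 1) (hlam : 0 < lam) (hc : 0 < c)
    (hβ : β ∈ Set.Ioo (0 : ℝ) 1)
    (Q0 Q1 : X → ℝ)
    (hQ0meas : Measurable Q0) (hQ1meas : Measurable Q1)
    (hQ0nn : ∀ x, 0 ≤ Q0 x) (hQ1nn : ∀ x, 0 ≤ Q1 x)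
    (hQ0int : ∫ x, Q0 x ∂μ = 1) (hQ1int : ∫ x, Q1 x ∂μ = 1)
    (V : ℝ → ℝ)
    (hVbdd : ∃ C, ∀ b ∈ Set.Icc (0 : ℝ) 1, |V b| ≤ C)
    (hVconv : ConvexOn ℝ (Set.Icc (0 : ℝ) 1) V)
    (hVint : ∀ b ∈ Set.Icc (0 : ℝ) 1,
      Integrable (fun x => V (Gf p Q0 Q1 x b) * Wf Q0 Q1 b x) μ)
    (hBellman : ∀ b ∈ Set.Icc (0 : ℝ) 1,
      V b = max (lam * b + β * ∫ x, V (Gf p Q0 Q1 x b) * Wf Q0 Q1 b x ∂μ)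
                (lam - c + β * V (1 - p)))
    (f : ℝ → ℝ)
    (hf : ∀ b, f b = lam * b - (lam - c) +
      β * ∫ x, V (Gf p Q0 Q1 x b) * Wf Q0 Q1 b x ∂μ - β * V (1 - p)) :
    ∀ μ₀ : ℝ, 0 ≤ μ₀ →
      ∃ ξ : ℝ, {b ∈ Set.Icc (0 : ℝ) 1 | f b ≤ -μ₀} =
        Set.Icc 0 ξ ∩ Set.Icc (0 : ℝ) 1 :=
  adr_f_sublevel_sets_are_intervals_general μ p lam c β hp hlam hc hβ Q0 Q1 hQ0nn hQ1nn hQ0int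
    hQ1int V hVbdd hVconv hVint hBellman f hf
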